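/- (Perfect privacy against a corrupted Alice.) For all p, q ∈ ZMod 2, the averaged four-qubit density operator (1/8) · Σ_{(m₆,s,ν) ∈ (ZMod 2)³} v v†, where v = |Z; p⟩ ⊗ |X; q+m₆⟩ ⊗ |Φ(m₆+s, p·s+ν)⟩, equals |Z;p⟩⟨Z;p| ⊗ (I₂/2) ⊗ (I₄/4). In particular this average is independent of q. -/
import Mathlib


open Matrix
open scoped BigOperators

noncomputable section

/-- `(-1)^c` as a complex number, for `c : ZMod 2`. -/
def sgn (c : ZMod 2) : ℂ := if c = 0 then 1 else -1

/-- `|Z;c⟩ = e_c`, the eigenvector of Pauli `Z` with eigenvalue `(−1)^c`. -/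
def ketZ (c : ZMod 2) : ZMod 2 → ℂ := fun d => if d = c then 1 else 0

/-- `|X;c⟩ = (e₀ + (−1)^c e₁)/√2`, the eigenvector of Pauli `X` with eigenvalue `(−1)^c`. -/
def ketX (c : ZMod 2) : ZMod 2 → ℂ :=
  fun d => (Real.sqrt 2 : ℂ)⁻¹ * (if d = 0 then 1 else sgn c)

/-- `|Y;c⟩ = (e₀ + (−1)^c·i·e₁)/√2`, the eigenvector of Pauli `Y` with eigenvalue `(−1)^c`. -/
def ketY (c : ZMod 2) : ZMod 2 → ℂ :=
  fun d => (Real.sqrt 2 : ℂ)⁻¹ * (if d = 0 then 1 else sgn c * Complex.I)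

/-- Tensor product of a family of single-qubit vectors. -/
def tensorVec {V : Type*} [Fintype V] (f : V → (ZMod 2 → ℂ)) : (V → ZMod 2) → ℂ :=
  fun x => ∏ i, f i (x i)

/-- Tensor (Kronecker) product of a family of single-qubit operators. -/
def tensorOp {V : Type*} [Fintype V] (f : V → Matrix (ZMod 2) (ZMod 2) ℂ) :
    Matrix (V → ZMod 2) (V → ZMod 2) ℂ :=
  fun x y => ∏ i, f i (x i) (y i)

/-- The rank-one outer product `|ψ⟩⟨ψ| = v v†`. -/
def outer {α : Type*} (ψ : α → ℂ) : Matrix α α ℂ := fun x y => ψ x * star (ψ y)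


/-- The two-qubit Bell-type state `|Φ(a,b)⟩ = (e₀ ⊗ e_b + (−1)^a e₁ ⊗ e_{1+b})/√2`,
satisfying `(X⊗X)|Φ(a,b)⟩ = (−1)^a |Φ(a,b)⟩` and `(Z⊗Z)|Φ(a,b)⟩ = (−1)^b |Φ(a,b)⟩`;
`bellAmp a b c d` is its amplitude on the basis vector `e_c ⊗ e_d`. -/
def bellAmp (a b : ZMod 2) : ZMod 2 → ZMod 2 → ℂ :=
  fun c d => (Real.sqrt 2 : ℂ)⁻¹ *
    (if c = 0 then (if d = b then 1 else 0) else sgn a * (if d = 1 + b then 1 else 0))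


/-- `(-1)^c` as an integer. -/
def sgnZ (c : ZMod 2) : ℤ := if c = 0 then 1 else -1

/-- Integer-valued amplitude: the state `v` with the `√2` factors stripped. -/
def uAmp (p q m6 s ν : ZMod 2) (x : Fin 4 → ZMod 2) : ℤ :=
  (if x 0 = p then 1 else 0) * (if x 1 = 0 then 1 else sgnZ (q + m6)) *
    (if x 2 = 0 then (if x 3 = p * s + ν then 1 else 0)
     else sgnZ (m6 + s) * (if x 3 = 1 + (p * s + ν) then 1 else 0))

lemma key : ∀ p q : ZMod 2, ∀ x y : Fin 4 → ZMod 2,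
    (∑ t : ZMod 2 × ZMod 2 × ZMod 2,
       uAmp p q t.1 t.2.1 t.2.2 x * uAmp p q t.1 t.2.1 t.2.2 y)
    = 4 * ((if x 0 = p then 1 else 0) * (if y 0 = p then 1 else 0) *
        (if x 1 = y 1 then 1 else 0) * (if x 2 = y 2 then 1 else 0) *
        (if x 3 = y 3 then 1 else 0)) := by decide

lemma vfact (p q m6 s ν : ZMod 2) (x : Fin 4 → ZMod 2) :
    ketZ p (x 0) * ketX (q + m6) (x 1) * bellAmp (m6 + s) (p * s + ν) (x 2) (x 3)
      = (Real.sqrt 2 : ℂ)⁻¹ * (Real.sqrt 2 : ℂ)⁻¹ * ((uAmp p q m6 s ν x : ℤ) : ℂ) := by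
  simp only [ketZ, ketX, bellAmp, sgn, uAmp, sgnZ]
  split_ifs <;> push_cast <;> ring

/-- Perfect privacy against a corrupted Alice: averaging the pure state
`v = |Z; p⟩ ⊗ |X; q+m₆⟩ ⊗ |Φ(m₆+s, p·s+ν)⟩` over the uniformly random pads
`(m₆, s, ν)` yields `|Z;p⟩⟨Z;p| ⊗ (I₂/2) ⊗ (I₄/4)`; in particular the average is
independent of `q`. -/
theorem alice_privacy (p q : ZMod 2) :
    (8 : ℂ)⁻¹ • ∑ t : ZMod 2 × ZMod 2 × ZMod 2,
        outer (fun x : Fin 4 → ZMod 2 =>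
          ketZ p (x 0) * ketX (q + t.1) (x 1) *
            bellAmp (t.1 + t.2.1) (p * t.2.1 + t.2.2) (x 2) (x 3))
      = tensorOp ![outer (ketZ p), (2 : ℂ)⁻¹ • 1, (2 : ℂ)⁻¹ • 1, (2 : ℂ)⁻¹ • 1] := by
  have hr : (Real.sqrt 2 : ℂ)⁻¹ * (Real.sqrt 2 : ℂ)⁻¹ = (2 : ℂ)⁻¹ := by
    rw [← mul_inv, ← Complex.ofReal_mul, Real.mul_self_sqrt (by norm_num)]; norm_num
  have hstar : star ((Real.sqrt 2 : ℂ))⁻¹ = (Real.sqrt 2 : ℂ)⁻¹ := by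
    rw [star_inv₀, Complex.star_def, Complex.conj_ofReal]
  ext x y
  simp only [Matrix.smul_apply, Matrix.sum_apply, outer, vfact]
  have hterm : ∀ t : ZMod 2 × ZMod 2 × ZMod 2,
      ((Real.sqrt 2 : ℂ)⁻¹ * (Real.sqrt 2 : ℂ)⁻¹ * ((uAmp p q t.1 t.2.1 t.2.2 x : ℤ) : ℂ)) *
        star ((Real.sqrt 2 : ℂ)⁻¹ * (Real.sqrt 2 : ℂ)⁻¹ * ((uAmp p q t.1 t.2.1 t.2.2 y : ℤ) : ℂ))
      = (4 : ℂ)⁻¹ * ((uAmp p q t.1 t.2.1 t.2.2 x * uAmp p q t.1 t.2.1 t.2.2 y : ℤ) : ℂ) := by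
    intro t
    rw [star_mul', star_mul', hstar, star_intCast]
    push_cast
    linear_combination (((uAmp p q t.1 t.2.1 t.2.2 x : ℤ) : ℂ) * ((uAmp p q t.1 t.2.1 t.2.2 y : ℤ) : ℂ))
      * ((2:ℂ)⁻¹ + (Real.sqrt 2 : ℂ)⁻¹ * (Real.sqrt 2 : ℂ)⁻¹) * hr
  rw [Finset.sum_congr rfl (fun t _ => hterm t), ← Finset.mul_sum, ← Int.cast_sum, key p q x y]
  simp only [tensorOp, Fin.prod_univ_four, Matrix.cons_val_zero, Matrix.cons_val_one,
    Matrix.head_cons, Matrix.cons_val_two, Matrix.cons_val_three, Matrix.tail_cons,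
    Matrix.smul_apply, Matrix.one_apply, smul_eq_mul, outer, ketZ]
  push_cast [apply_ite (Int.cast : ℤ → ℂ), apply_ite (star : ℂ → ℂ)]
  split_ifs <;> norm_num
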